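/- Fix α ∈ (0,1), a > 0, T ∈ ℕ with T ≥ 1, real numbers A ≤ B, outcomes y_1, …, y_T ∈ [A, B], and vectors x_1, …, x_T ∈ ℝ^{p+1} with ‖x_t‖_∞ ≤ max(1, B) for all t. Let L̃_T^θ = Σ_{t=1}^{T} λ_α(y_t, min(max(x_t'θ, A), B)) and J̃_T(θ) = L̃_T^θ/√T + a‖θ‖₁, and let L_T^{θ₀} = Σ_{t=1}^{T} λ_α(y_t, x_t'θ₀). Then for every θ₀ ∈ ℝ^{p+1}: −ln( (a/2)^{p+1} · ∫_{ℝ^{p+1}} exp(−J̃_T(θ)) dθ ) ≤ L_T^{θ₀}/√T + a‖θ₀‖₁ + (p+1)·ln(1 + (√T/a)·max(1, B)). -/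

import Mathlib

/-!
Clamping the prediction to `[A, B]` only moves it towards `y_t`, and the pinball loss is
`1`-Lipschitz, so `J̃_T(θ) ≤ L_T^{θ₀}/√T + a‖θ₀‖₁ + (√T max(1, B) + a)‖θ − θ₀‖₁`. Hence
`exp(−J̃_T)` dominates a multiple of the Laplace density centred at `θ₀`, whose integral is
`(2 / (√T max(1, B) + a))^{p+1}`; taking `−log` gives the bound.
-/

open MeasureTheory

/-- The pinball loss at level `α`: `λ_α(y, γ) = α(y − γ)` if `y ≥ γ` and
`(1 − α)(γ − y)` if `y < γ`. -/
noncomputable def pinball (α y γ : ℝ) : ℝ :=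
  if γ ≤ y then α * (y - γ) else (1 - α) * (γ - y)

section Pinball

variable {α : ℝ}

lemma pinball_nonneg (hα : α ∈ Set.Icc (0 : ℝ) 1) (y γ : ℝ) : 0 ≤ pinball α y γ := by
  obtain ⟨h0, h1⟩ := hα
  unfold pinball
  split_ifs with h
  · nlinarith
  · nlinarith [not_le.mp h]

lemma continuous_pinball (α y : ℝ) : Continuous (pinball α y) :=
  Continuous.if_le (by fun_prop) (by fun_prop) continuous_id continuous_const
    fun γ h => by simp [h]

lemma pinball_le_add_abs_sub (hα : α ∈ Set.Icc (0 : ℝ) 1) (y γ γ' : ℝ) :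
    pinball α y γ ≤ pinball α y γ' + |γ - γ'| := by
  obtain ⟨h0, h1⟩ := hα
  unfold pinball
  have h2 := le_abs_self (γ - γ')
  have h3 := neg_abs_le (γ - γ')
  split_ifs with h h' h'
  · nlinarith
  · nlinarith [not_le.mp h']
  · nlinarith [not_le.mp h]
  · nlinarith [not_le.mp h, not_le.mp h']

lemma pinball_le_of_mem_uIcc (hα : α ∈ Set.Icc (0 : ℝ) 1) {y γ γ' : ℝ}
    (h : γ' ∈ Set.uIcc y γ) : pinball α y γ' ≤ pinball α y γ := by
  obtain ⟨h0, h1⟩ := hα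
  unfold pinball
  rcases Set.mem_uIcc.mp h with ⟨hy, hγ⟩ | ⟨hγ, hy⟩ <;> split_ifs <;> nlinarith

lemma min_max_mem_uIcc {A B y : ℝ} (hy : y ∈ Set.Icc A B) (γ : ℝ) :
    min (max γ A) B ∈ Set.uIcc y γ := by
  obtain ⟨hA, hB⟩ := hy
  rw [Set.mem_uIcc]
  rcases le_total y γ with h | h
  · exact .inl ⟨le_min (le_max_of_le_left h) hB, min_le_of_left_le (max_le le_rfl (hA.trans h))⟩
  · exact .inr ⟨le_min (le_max_left _ _) (h.trans hB), min_le_of_left_le (max_le h hA)⟩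

lemma abs_sum_mul_sub_sum_mul_le {ι : Type*} [Fintype ι] {x : ι → ℝ} {M : ℝ}
    (hx : ∀ i, |x i| ≤ M) (θ θ₀ : ι → ℝ) :
    |∑ i, x i * θ i - ∑ i, x i * θ₀ i| ≤ M * ∑ i, |θ i - θ₀ i| := by
  rw [← Finset.sum_sub_distrib, Finset.mul_sum]
  refine (Finset.abs_sum_le_sum_abs _ _).trans (Finset.sum_le_sum fun i _ => ?_)
  rw [← mul_sub, abs_mul]
  exact mul_le_mul_of_nonneg_right (hx i) (abs_nonneg _)

lemma sum_pinball_min_max_le {ι τ : Type*} [Fintype ι] {A B M : ℝ}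
    (hα : α ∈ Set.Icc (0 : ℝ) 1) {s : Finset τ} {y : τ → ℝ} {x : τ → ι → ℝ}
    (hy : ∀ t ∈ s, y t ∈ Set.Icc A B) (hx : ∀ t ∈ s, ∀ i, |x t i| ≤ M) (θ θ₀ : ι → ℝ) :
    ∑ t ∈ s, pinball α (y t) (min (max (∑ i, x t i * θ i) A) B)
      ≤ ∑ t ∈ s, pinball α (y t) (∑ i, x t i * θ₀ i) + s.card * (M * ∑ i, |θ i - θ₀ i|) := by
  rw [← nsmul_eq_mul, ← Finset.sum_const, ← Finset.sum_add_distrib]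
  refine Finset.sum_le_sum fun t ht => ?_
  calc pinball α (y t) (min (max (∑ i, x t i * θ i) A) B)
      ≤ pinball α (y t) (∑ i, x t i * θ i) :=
        pinball_le_of_mem_uIcc hα (min_max_mem_uIcc (hy t ht) _)
    _ ≤ pinball α (y t) (∑ i, x t i * θ₀ i) + |∑ i, x t i * θ i - ∑ i, x t i * θ₀ i| :=
        pinball_le_add_abs_sub hα _ _ _
    _ ≤ pinball α (y t) (∑ i, x t i * θ₀ i) + M * ∑ i, |θ i - θ₀ i| := by
        grw [abs_sum_mul_sub_sum_mul_le (hx t ht)]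

end Pinball

section Laplace

variable {ι : Type*} [Fintype ι] {b : ℝ}

lemma integral_exp_neg_mul_abs (hb : 0 < b) : ∫ x : ℝ, Real.exp (-(b * |x|)) = 2 / b := by
  rw [integral_comp_abs (f := fun x => Real.exp (-(b * x)))]
  simp_rw [← neg_mul]
  rw [integral_exp_mul_Ioi (neg_neg_of_pos hb)]
  field_simp
  simp

lemma integral_exp_neg_mul_sum_abs (hb : 0 < b) :
    ∫ θ : ι → ℝ, Real.exp (-(b * ∑ i, |θ i|)) = (2 / b) ^ Fintype.card ι := by
  simp_rw [Finset.mul_sum, ← Finset.sum_neg_distrib, Real.exp_sum]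
  rw [volume_pi, integral_fintype_prod_eq_pow (fun x : ℝ => Real.exp (-(b * |x|))),
    integral_exp_neg_mul_abs hb]

lemma integrable_exp_neg_mul_sum_abs (hb : 0 < b) :
    Integrable fun θ : ι → ℝ => Real.exp (-(b * ∑ i, |θ i|)) :=
  .of_integral_ne_zero <| by rw [integral_exp_neg_mul_sum_abs hb]; positivity

variable {F : (ι → ℝ) → ℝ} {a c L₀ : ℝ} {θ₀ : ι → ℝ}

lemma sum_abs_le_sum_abs_add_sum_abs_sub (θ θ₀ : ι → ℝ) :
    ∑ i, |θ i| ≤ ∑ i, |θ₀ i| + ∑ i, |θ i - θ₀ i| := by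
  rw [← Finset.sum_add_distrib]
  exact Finset.sum_le_sum fun i _ => sub_le_iff_le_add'.mp (abs_sub_abs_le_abs_sub (θ i) (θ₀ i))

lemma exp_neg_mul_pow_le_integral_exp_neg (ha : 0 < a) (hc : 0 ≤ c) (hF : Measurable F)
    (hF0 : ∀ θ, 0 ≤ F θ) (hFθ₀ : ∀ θ, F θ ≤ L₀ + c * ∑ i, |θ i - θ₀ i|) :
    Real.exp (-(L₀ + a * ∑ i, |θ₀ i|)) * (2 / (c + a)) ^ Fintype.card ι
      ≤ ∫ θ, Real.exp (-(F θ + a * ∑ i, |θ i|)) := by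
  have hca : 0 < c + a := by linarith
  have hlower : ∀ θ, Real.exp (-(L₀ + a * ∑ i, |θ₀ i|)) *
      Real.exp (-((c + a) * ∑ i, |θ i - θ₀ i|)) ≤ Real.exp (-(F θ + a * ∑ i, |θ i|)) := by
    intro θ
    rw [← Real.exp_add, Real.exp_le_exp]
    nlinarith [hFθ₀ θ, sum_abs_le_sum_abs_add_sum_abs_sub θ θ₀]
  have hdensity : ∫ θ : ι → ℝ, Real.exp (-((c + a) * ∑ i, |θ i - θ₀ i|))
      = (2 / (c + a)) ^ Fintype.card ι :=
    (integral_sub_right_eq_self _ θ₀).trans (integral_exp_neg_mul_sum_abs hca)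
  have hint : Integrable fun θ : ι → ℝ => Real.exp (-(F θ + a * ∑ i, |θ i|)) := by
    refine (integrable_exp_neg_mul_sum_abs ha).mono (by fun_prop) (.of_forall fun θ => ?_)
    simp only [Real.norm_eq_abs, Real.abs_exp, Real.exp_le_exp]
    linarith [hF0 θ]
  rw [← hdensity, ← integral_const_mul]
  exact integral_mono
    (((integrable_exp_neg_mul_sum_abs hca).comp_sub_right θ₀).const_mul _) hint hlower

lemma neg_log_integral_exp_neg_le (ha : 0 < a) (hc : 0 ≤ c) (hF : Measurable F)
    (hF0 : ∀ θ, 0 ≤ F θ) (hFθ₀ : ∀ θ, F θ ≤ L₀ + c * ∑ i, |θ i - θ₀ i|) :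
    -Real.log ((a / 2) ^ Fintype.card ι * ∫ θ, Real.exp (-(F θ + a * ∑ i, |θ i|)))
      ≤ L₀ + a * ∑ i, |θ₀ i| + Fintype.card ι * Real.log (1 + c / a) := by
  have hbound : Real.exp (-(L₀ + a * ∑ i, |θ₀ i|)) * ((1 + c / a) ^ Fintype.card ι)⁻¹
      ≤ (a / 2) ^ Fintype.card ι * ∫ θ, Real.exp (-(F θ + a * ∑ i, |θ i|)) := by
    calc Real.exp (-(L₀ + a * ∑ i, |θ₀ i|)) * ((1 + c / a) ^ Fintype.card ι)⁻¹
        = (a / 2) ^ Fintype.card ι *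
            (Real.exp (-(L₀ + a * ∑ i, |θ₀ i|)) * (2 / (c + a)) ^ Fintype.card ι) := by
          rw [mul_left_comm, ← mul_pow, ← inv_pow]
          congr 2
          field_simp
          ring
      _ ≤ _ := mul_le_mul_of_nonneg_left
          (exp_neg_mul_pow_le_integral_exp_neg ha hc hF hF0 hFθ₀) (by positivity)
  have hlog := Real.log_le_log (by positivity) hbound
  rw [Real.log_mul (Real.exp_ne_zero _) (by positivity), Real.log_exp, Real.log_inv,
    Real.log_pow] at hlog
  linarith

end Laplace

theorem neg_log_integral_le_general {p : ℕ} (α a A B : ℝ)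
    (hα : α ∈ Set.Ioo (0 : ℝ) 1) (ha : 0 < a)
    (T : ℕ)
    (y : ℕ → ℝ) (hy : ∀ t ∈ Finset.Icc 1 T, y t ∈ Set.Icc A B)
    (x : ℕ → Fin (p + 1) → ℝ)
    (hx : ∀ t ∈ Finset.Icc 1 T, ∀ i, |x t i| ≤ max 1 B)
    (θ₀ : Fin (p + 1) → ℝ) :
    -Real.log ((a / 2) ^ (p + 1) *
        ∫ θ : Fin (p + 1) → ℝ,
          Real.exp (-((∑ t ∈ Finset.Icc 1 T,
              pinball α (y t) (min (max (∑ i, x t i * θ i) A) B)) / Real.sqrt T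
            + a * ∑ i, |θ i|)))
      ≤ (∑ t ∈ Finset.Icc 1 T, pinball α (y t) (∑ i, x t i * θ₀ i)) / Real.sqrt T
        + a * ∑ i, |θ₀ i|
        + (p + 1 : ℝ) * Real.log (1 + Real.sqrt T / a * max 1 B) := by
  have hα' := Set.Ioo_subset_Icc_self hα
  have hc : 0 ≤ Real.sqrt T * max 1 B :=
    mul_nonneg (Real.sqrt_nonneg _) (zero_le_one.trans (le_max_left _ _))
  have hF : Measurable fun θ : Fin (p + 1) → ℝ => (∑ t ∈ Finset.Icc 1 T,
      pinball α (y t) (min (max (∑ i, x t i * θ i) A) B)) / Real.sqrt T :=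
    ((continuous_finsetSum _ fun t _ =>
      (continuous_pinball _ _).comp (by fun_prop)).div_const _).measurable
  have hF0 (θ : Fin (p + 1) → ℝ) : 0 ≤ (∑ t ∈ Finset.Icc 1 T,
      pinball α (y t) (min (max (∑ i, x t i * θ i) A) B)) / Real.sqrt T :=
    div_nonneg (Finset.sum_nonneg fun t _ => pinball_nonneg hα' _ _) (Real.sqrt_nonneg _)
  have hFθ₀ (θ : Fin (p + 1) → ℝ) : (∑ t ∈ Finset.Icc 1 T,
      pinball α (y t) (min (max (∑ i, x t i * θ i) A) B)) / Real.sqrt T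
      ≤ (∑ t ∈ Finset.Icc 1 T, pinball α (y t) (∑ i, x t i * θ₀ i)) / Real.sqrt T
        + Real.sqrt T * max 1 B * ∑ i, |θ i - θ₀ i| := by
    grw [sum_pinball_min_max_le hα' hy hx θ θ₀, add_div, Nat.card_Icc, Nat.add_sub_cancel,
      mul_div_right_comm, Real.div_sqrt, mul_assoc]
  have hmain := neg_log_integral_exp_neg_le ha hc hF hF0 hFθ₀
  rw [Fintype.card_fin, ← div_mul_eq_mul_div] at hmain
  exact_mod_cast hmain

theorem neg_log_integral_le {p : ℕ} (α a A B : ℝ)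
    (hα : α ∈ Set.Ioo (0 : ℝ) 1) (ha : 0 < a) (hAB : A ≤ B)
    (T : ℕ) (hT : 1 ≤ T)
    (y : ℕ → ℝ) (hy : ∀ t ∈ Finset.Icc 1 T, y t ∈ Set.Icc A B)
    (x : ℕ → Fin (p + 1) → ℝ)
    (hx : ∀ t ∈ Finset.Icc 1 T, ∀ i, |x t i| ≤ max 1 B)
    (θ₀ : Fin (p + 1) → ℝ) :
    -Real.log ((a / 2) ^ (p + 1) *
        ∫ θ : Fin (p + 1) → ℝ,
          Real.exp (-((∑ t ∈ Finset.Icc 1 T,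
              pinball α (y t) (min (max (∑ i, x t i * θ i) A) B)) / Real.sqrt T
            + a * ∑ i, |θ i|)))
      ≤ (∑ t ∈ Finset.Icc 1 T, pinball α (y t) (∑ i, x t i * θ₀ i)) / Real.sqrt T
        + a * ∑ i, |θ₀ i|
        + (p + 1 : ℝ) * Real.log (1 + Real.sqrt T / a * max 1 B) :=
  neg_log_integral_le_general α a A B hα ha T y hy x hx θ₀
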